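/- Under the same hypotheses, if additionally L_BT(r) ≥ L_BT(r₀), then E_{P̃}[ (Δ_r − Δ_{r₀})² ] ≤ 4·( (ε/c_B)² + (1/(Z·c_B))·( L_BT(r) − L_BT(r₀) ) ). -/

import Mathlib

/-! Write `Δ`, `Δ₀` for the margins of `r`, `r₀` and `p = σ(Δ_{r*})`. Bradley–Terry consistency puts
the fraction `p` of the weight `w = P(x,y,y') + P(x,y',y)` of an unordered pair on the orientation
`(y,y')`, so symmetrizing turns `2·L_BT(r)` into the `w`-weighted sum of the logistic losses
`ℓ_p(Δ) = log(1 + e^Δ) - pΔ`. On `[-2B, 2B]` the softplus has curvature at least `c_B`, hence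
`ℓ_p(Δ) - ℓ_p(Δ₀) ≥ (σ(Δ₀) - p)(Δ - Δ₀) + c_B/2 (Δ - Δ₀)²`, and AM–GM on the linear term gives
`(Δ - Δ₀)² ≤ 4/c_B (ℓ_p(Δ) - ℓ_p(Δ₀)) + 4/c_B² (p - σ(Δ₀))²`. Summing with weights `w` and
dividing by `2Z` gives the bound. -/

open scoped BigOperators

/-- The sigmoid function σ(t) = 1/(1+e^{-t}). -/
noncomputable def sigmoid (t : ℝ) : ℝ := 1 / (1 + Real.exp (-t))

/-- The population Bradley–Terry objective. -/
noncomputable def LBT {X Y : Type*} [Fintype X] [Fintype Y]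
    (P : X → Y → Y → ℝ) (r : X → Y → ℝ) : ℝ :=
  -∑ x, ∑ y, ∑ y', P x y y' * Real.log (sigmoid (r x y - r x y'))

/-- Normalizing constant Z of the comparison distribution P̃. -/
noncomputable def Zconst {X Y : Type*} [Fintype X] [Fintype Y] [DecidableEq Y]
    (P : X → Y → Y → ℝ) : ℝ :=
  (∑ x, ∑ y, ∑ y', if y ≠ y' then P x y y' + P x y' y else 0) / 2

/-- Expectation under the comparison distribution P̃ of a symmetric function of (x,{y,y'}). -/
noncomputable def ePt {X Y : Type*} [Fintype X] [Fintype Y] [DecidableEq Y]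
    (P : X → Y → Y → ℝ) (f : X → Y → Y → ℝ) : ℝ :=
  (∑ x, ∑ y, ∑ y', if y ≠ y' then (P x y y' + P x y' y) * f x y y' else 0) /
    (2 * Zconst P)

open Finset Set

theorem ConvexOn.add_mul_sub_le_of_hasDerivAt {S : Set ℝ} {f : ℝ → ℝ} {x y f' : ℝ}
    (hf : ConvexOn ℝ S f) (hx : x ∈ S) (hy : y ∈ S) (hd : HasDerivAt f f' x) :
    f x + f' * (y - x) ≤ f y := by
  rcases lt_trichotomy x y with hxy | rfl | hxy
  · have h := hf.le_slope_of_hasDerivAt hx hy hxy hd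
    rw [slope_def_field, le_div_iff₀ (sub_pos.2 hxy)] at h
    linarith
  · simp
  · have h := hf.slope_le_of_hasDerivAt hy hx hxy hd
    rw [slope_def_field, div_le_iff₀ (sub_pos.2 hxy)] at h
    linarith

theorem sigmoid_eq_real_sigmoid : sigmoid = Real.sigmoid := by
  funext t
  rw [sigmoid, Real.sigmoid_def, one_div]

theorem hasDerivAt_sigmoid (t : ℝ) : HasDerivAt sigmoid (sigmoid t * (1 - sigmoid t)) t := by
  rw [sigmoid_eq_real_sigmoid]
  exact Real.hasDerivAt_sigmoid t

theorem sigmoid_mul_one_sub_sigmoid_eq (t : ℝ) :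
    sigmoid t * (1 - sigmoid t) = (2 * (1 + Real.cosh t))⁻¹ := by
  rw [sigmoid_eq_real_sigmoid, ← Real.sigmoid_neg, Real.sigmoid_def, Real.sigmoid_def,
    Real.cosh_eq, neg_neg, ← mul_inv]
  congr 1
  rw [add_mul, one_mul, mul_add, mul_one, ← Real.exp_add, neg_add_cancel, Real.exp_zero]
  ring

theorem sigmoid_mul_one_sub_sigmoid_pos (t : ℝ) : 0 < sigmoid t * (1 - sigmoid t) := by
  rw [sigmoid_mul_one_sub_sigmoid_eq]
  positivity

theorem sigmoid_mul_one_sub_sigmoid_le_of_abs_le {M t : ℝ} (h : |t| ≤ M) :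
    sigmoid M * (1 - sigmoid M) ≤ sigmoid t * (1 - sigmoid t) := by
  rw [sigmoid_mul_one_sub_sigmoid_eq, sigmoid_mul_one_sub_sigmoid_eq]
  gcongr
  rw [Real.cosh_le_cosh, abs_of_nonneg ((abs_nonneg t).trans h)]
  exact h

theorem sigmoid_sub (a b : ℝ) : sigmoid (a - b) = Real.exp a / (Real.exp a + Real.exp b) := by
  rw [sigmoid, neg_sub, Real.exp_sub]
  field_simp

noncomputable def softplus (t : ℝ) : ℝ := Real.log (1 + Real.exp t)

theorem hasDerivAt_softplus (t : ℝ) : HasDerivAt softplus (sigmoid t) t := by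
  have h := sigmoid_sub t 0
  rw [sub_zero, Real.exp_zero, add_comm] at h
  rw [h]
  exact ((Real.hasDerivAt_exp t).const_add 1).log (by positivity)

theorem softplus_neg (t : ℝ) : softplus (-t) = softplus t - t := by
  have h : 1 + Real.exp t = Real.exp t * (1 + Real.exp (-t)) := by
    rw [mul_add, mul_one, ← Real.exp_add, add_neg_cancel, Real.exp_zero, add_comm]
  rw [softplus, softplus, h, Real.log_mul (by positivity) (by positivity), Real.log_exp]
  ring

theorem log_sigmoid_neg (t : ℝ) : Real.log (sigmoid (-t)) = -softplus t := by
  rw [sigmoid, neg_neg, one_div, Real.log_inv, softplus]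

theorem log_sigmoid (t : ℝ) : Real.log (sigmoid t) = t - softplus t := by
  rw [← neg_neg t, log_sigmoid_neg, softplus_neg, neg_neg]
  ring

theorem hasDerivAt_softplus_sub_sq (c t : ℝ) :
    HasDerivAt (fun t => softplus t - c / 2 * t ^ 2) (sigmoid t - c * t) t := by
  refine ((hasDerivAt_softplus t).sub ((hasDerivAt_pow 2 t).const_mul (c / 2))).congr_deriv ?_
  push_cast
  ring

theorem convexOn_softplus_sub_sq (M : ℝ) :
    ConvexOn ℝ (Icc (-M) M)
      (fun t => softplus t - sigmoid M * (1 - sigmoid M) / 2 * t ^ 2) := by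
  set c := sigmoid M * (1 - sigmoid M)
  have hf' := hasDerivAt_softplus_sub_sq c
  have hf'' (t : ℝ) :
      HasDerivAt (fun t => sigmoid t - c * t) (sigmoid t * (1 - sigmoid t) - c) t :=
    ((hasDerivAt_sigmoid t).sub ((hasDerivAt_id' t).const_mul c)).congr_deriv (by ring)
  refine convexOn_of_hasDerivWithinAt2_nonneg (convex_Icc _ _)
    (fun t _ => (hf' t).continuousAt.continuousWithinAt)
    (fun t _ => (hf' t).hasDerivWithinAt) (fun t _ => (hf'' t).hasDerivWithinAt) ?_
  intro t ht
  rw [interior_Icc] at ht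
  exact sub_nonneg.2 (sigmoid_mul_one_sub_sigmoid_le_of_abs_le (abs_le.2 ⟨ht.1.le, ht.2.le⟩))

theorem softplus_sub_softplus_ge {M a b : ℝ} (ha : |a| ≤ M) (hb : |b| ≤ M) :
    sigmoid b * (a - b) + sigmoid M * (1 - sigmoid M) / 2 * (a - b) ^ 2 ≤
      softplus a - softplus b := by
  have h := (convexOn_softplus_sub_sq M).add_mul_sub_le_of_hasDerivAt
    (abs_le.1 hb) (abs_le.1 ha) (hasDerivAt_softplus_sub_sq _ b)
  linear_combination h

/-- The cross-entropy `-(p log σ(t) + (1 - p) log σ(-t))` of a margin `t` against a soft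
label `p`. -/
noncomputable def logisticLoss (p t : ℝ) : ℝ := softplus t - p * t

theorem sq_sub_le_logisticLoss_sub {M a b : ℝ} (p : ℝ) (ha : |a| ≤ M) (hb : |b| ≤ M) :
    (a - b) ^ 2 ≤
      4 / (sigmoid M * (1 - sigmoid M)) * (logisticLoss p a - logisticLoss p b) +
        4 / (sigmoid M * (1 - sigmoid M)) ^ 2 * (p - sigmoid b) ^ 2 := by
  set c := sigmoid M * (1 - sigmoid M)
  have hc : 0 < c := sigmoid_mul_one_sub_sigmoid_pos M
  have hconv := mul_le_mul_of_nonneg_left (softplus_sub_softplus_ge ha hb) hc.le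
  rw [← mul_le_mul_iff_right₀ (pow_pos hc 2)]
  field_simp
  unfold logisticLoss
  -- AM–GM: `(2 (p - σ b) - c (a - b))² ≥ 0` absorbs the linear term.
  linear_combination 4 * hconv + sq_nonneg (2 * (p - sigmoid b) - c * (a - b))

theorem neg_mul_log_sigmoid_add_mul_log_sigmoid_neg {P₁ P₂ p d : ℝ} (h : P₁ = (P₁ + P₂) * p) :
    -(P₁ * Real.log (sigmoid d) + P₂ * Real.log (sigmoid (-d))) =
      (P₁ + P₂) * logisticLoss p d := by
  rw [log_sigmoid, log_sigmoid_neg, logisticLoss]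
  linear_combination -d * h

section PairSum

variable {X Y : Type*} [Fintype X] [Fintype Y]

noncomputable def pairSum (P f : X → Y → Y → ℝ) : ℝ :=
  ∑ x, ∑ y, ∑ y', (P x y y' + P x y' y) * f x y y'

variable {P : X → Y → Y → ℝ}

theorem pairSum_add (f g : X → Y → Y → ℝ) :
    pairSum P (fun x y y' => f x y y' + g x y y') = pairSum P f + pairSum P g := by
  simp only [pairSum, mul_add, sum_add_distrib]

theorem pairSum_sub (f g : X → Y → Y → ℝ) :
    pairSum P (fun x y y' => f x y y' - g x y y') = pairSum P f - pairSum P g := by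
  simp only [pairSum, mul_sub, sum_sub_distrib]

theorem pairSum_const_mul (a : ℝ) (f : X → Y → Y → ℝ) :
    pairSum P (fun x y y' => a * f x y y') = a * pairSum P f := by
  simp only [pairSum, mul_sum, mul_left_comm a]

theorem pairSum_le_pairSum (hP : ∀ x y y', 0 ≤ P x y y') {f g : X → Y → Y → ℝ}
    (h : ∀ x y y', f x y y' ≤ g x y y') : pairSum P f ≤ pairSum P g :=
  sum_le_sum fun x _ => sum_le_sum fun y _ => sum_le_sum fun y' _ =>
    mul_le_mul_of_nonneg_left (h x y y') (add_nonneg (hP x y y') (hP x y' y))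

theorem ePt_eq_pairSum_div [DecidableEq Y] (P : X → Y → Y → ℝ) {f : X → Y → Y → ℝ}
    (hf : ∀ x y, f x y y = 0) : ePt P f = pairSum P f / (2 * Zconst P) := by
  unfold ePt pairSum
  congr 1
  refine sum_congr rfl fun x _ => sum_congr rfl fun y _ => sum_congr rfl fun y' _ => ?_
  split_ifs with h
  · rfl
  · rw [not_not.1 h, hf, mul_zero]

theorem two_mul_LBT_eq_pairSum {q : X → Y → Y → ℝ}
    (hq : ∀ x y y', P x y y' = (P x y y' + P x y' y) * q x y y') (r : X → Y → ℝ) :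
    2 * LBT P r = pairSum P (fun x y y' => logisticLoss (q x y y') (r x y - r x y')) := by
  have hswap : LBT P r = -∑ x, ∑ y, ∑ y', P x y' y * Real.log (sigmoid (-(r x y - r x y'))) := by
    simp only [LBT, neg_sub]
    exact congrArg _ (sum_congr rfl fun x _ => sum_comm)
  rw [two_mul]
  nth_rewrite 2 [hswap]
  simp only [LBT, ← neg_add, ← sum_add_distrib, ← sum_neg_distrib]
  exact sum_congr rfl fun x _ => sum_congr rfl fun y _ => sum_congr rfl fun y' _ =>
    neg_mul_log_sigmoid_add_mul_log_sigmoid_neg (hq x y y')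

end PairSum

theorem eq_add_mul_sigmoid_of_factorization {X Y : Type*} {P : X → Y → Y → ℝ} {PX : X → ℝ}
    {pplus pminus rstar : X → Y → ℝ}
    (hlink : ∀ x y, pplus x y = Real.exp (rstar x y) * pminus x y)
    (hfact : ∀ x yp ym, P x yp ym = PX x * pplus x yp * pminus x ym) (x : X) (y y' : Y) :
    P x y y' = (P x y y' + P x y' y) * sigmoid (rstar x y - rstar x y') := by
  rw [sigmoid_sub, hfact, hfact, hlink, hlink]
  field_simp

theorem stmt_16_general {X Y : Type*} [Fintype X] [Fintype Y] [DecidableEq Y]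
    (P : X → Y → Y → ℝ) (PX : X → ℝ) (pplus pminus : X → Y → ℝ)
    (rstar : X → Y → ℝ)
    (hPX0 : ∀ x, 0 < PX x)
    (hm0 : ∀ x y, 0 < pminus x y)
    (hlink : ∀ x y, pplus x y = Real.exp (rstar x y) * pminus x y)
    (hfact : ∀ x yp ym, P x yp ym = PX x * pplus x yp * pminus x ym)
    (hZ : 0 < Zconst P)
    (B : ℝ) (r r₀ : X → Y → ℝ)
    (hr : ∀ x y, |r x y| ≤ B) (hr₀ : ∀ x y, |r₀ x y| ≤ B)
    (eps : ℝ)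
    (heps : eps ^ 2 = ePt P (fun x y y' =>
      (sigmoid (rstar x y - rstar x y') - sigmoid (r₀ x y - r₀ x y')) ^ 2)) :
    ePt P (fun x y y' => ((r x y - r x y') - (r₀ x y - r₀ x y')) ^ 2) ≤
      4 * ((eps / (sigmoid (2 * B) * (1 - sigmoid (2 * B)))) ^ 2 +
        (1 / (Zconst P * (sigmoid (2 * B) * (1 - sigmoid (2 * B))))) *
          (LBT P r - LBT P r₀)) := by
  have hc := sigmoid_mul_one_sub_sigmoid_pos (2 * B)
  have hP (x : X) (y y' : Y) : 0 ≤ P x y y' := by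
    rw [hfact, hlink]
    exact (mul_pos (mul_pos (hPX0 x) (mul_pos (Real.exp_pos _) (hm0 x y))) (hm0 x y')).le
  have hBT := eq_add_mul_sigmoid_of_factorization hlink hfact
  have hmargin {s : X → Y → ℝ} (hs : ∀ x y, |s x y| ≤ B) (x : X) (y y' : Y) :
      |s x y - s x y'| ≤ 2 * B := by
    linarith [abs_sub (s x y) (s x y'), hs x y, hs x y']
  have hsum := pairSum_le_pairSum hP fun x y y' =>
    sq_sub_le_logisticLoss_sub (sigmoid (rstar x y - rstar x y')) (hmargin hr x y y')
      (hmargin hr₀ x y y')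
  rw [pairSum_add, pairSum_const_mul, pairSum_const_mul, pairSum_sub,
    ← two_mul_LBT_eq_pairSum hBT, ← two_mul_LBT_eq_pairSum hBT] at hsum
  rw [ePt_eq_pairSum_div P (by simp)] at heps ⊢
  rw [eq_div_iff (by positivity)] at heps
  rw [← heps] at hsum
  rw [div_le_iff₀ (by positivity)]
  refine hsum.trans_eq ?_
  field_simp
  ring

/-- Under the hypotheses of the basic inequality, if additionally L_BT(r) ≥ L_BT(r₀), then
E_{P̃}[(Δ_r − Δ_{r₀})²] ≤ 4·((ε/c_B)² + (1/(Z·c_B))·(L_BT(r) − L_BT(r₀))),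
where c_B = σ(2B)(1−σ(2B)) and ε² = E_{P̃}[(σ(Δ_{r*}) − σ(Δ_{r₀}))²]. -/
theorem stmt_16 {X Y : Type*} [Fintype X] [Fintype Y] [DecidableEq Y]
    [Nonempty X] [Nonempty Y]
    (P : X → Y → Y → ℝ) (PX : X → ℝ) (pplus pminus : X → Y → ℝ)
    (rstar : X → Y → ℝ)
    (hPX0 : ∀ x, 0 < PX x) (hPX1 : ∑ x, PX x = 1)
    (hm0 : ∀ x y, 0 < pminus x y)
    (hp1 : ∀ x, ∑ y, pplus x y = 1) (hm1 : ∀ x, ∑ y, pminus x y = 1)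
    (hlink : ∀ x y, pplus x y = Real.exp (rstar x y) * pminus x y)
    (hfact : ∀ x yp ym, P x yp ym = PX x * pplus x yp * pminus x ym)
    (hZ : 0 < Zconst P)
    (B : ℝ) (hB : 0 < B) (r r₀ : X → Y → ℝ)
    (hr : ∀ x y, |r x y| ≤ B) (hr₀ : ∀ x y, |r₀ x y| ≤ B)
    (eps : ℝ) (heps0 : 0 ≤ eps)
    (heps : eps ^ 2 = ePt P (fun x y y' =>
      (sigmoid (rstar x y - rstar x y') - sigmoid (r₀ x y - r₀ x y')) ^ 2))
    (hL : LBT P r₀ ≤ LBT P r) :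
    ePt P (fun x y y' => ((r x y - r x y') - (r₀ x y - r₀ x y')) ^ 2) ≤
      4 * ((eps / (sigmoid (2 * B) * (1 - sigmoid (2 * B)))) ^ 2 +
        (1 / (Zconst P * (sigmoid (2 * B) * (1 - sigmoid (2 * B))))) *
          (LBT P r - LBT P r₀)) :=
  stmt_16_general P PX pplus pminus rstar hPX0 hm0 hlink hfact hZ B r r₀ hr hr₀ eps heps
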